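/- Under hypotheses (H.1) and (H.2), the averaged noise over the tree converges: (1/|T_n|) Σ_{k ∈ T_{n,p}} ε_k → 0 almost surely as n → ∞. -/

import Mathlib

open MeasureTheory ProbabilityTheory Filter Matrix Topology
open scoped Kronecker

noncomputable section

namespace BARpaper

/-- The `n`-th generation `G_n = {2^n, ..., 2^(n+1)-1}` of the binary tree. -/
def gen (n : ℕ) : Finset ℕ := Finset.Ico (2 ^ n) (2 ^ (n + 1))

/-- The tree `T_n` of all individuals up to generation `n`; `|T_n| = 2^(n+1)-1`. -/
def tree (n : ℕ) : Finset ℕ := Finset.Icc 1 (2 ^ (n + 1) - 1)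

/-- `T_{n,q}`: individuals of the tree `T_n` with label at least `2^q`. -/
def treeFrom (n q : ℕ) : Finset ℕ := (tree n).filter fun k => 2 ^ q ≤ k

/-- Companion matrix with first row `c 1, ..., c p`, ones on the subdiagonal,
zeros elsewhere. -/
def companion (p : ℕ) (c : ℕ → ℝ) : Matrix (Fin p) (Fin p) ℝ :=
  Matrix.of fun i j =>
    if (i : ℕ) = 0 then c ((j : ℕ) + 1) else if (j : ℕ) + 1 = (i : ℕ) then 1 else 0

variable {Ω : Type*}

/-- The σ-algebra `F_n` generated by the `X_k`, `k ∈ T_n`. -/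
def sigTree [MeasurableSpace Ω] (X : ℕ → Ω → ℝ) (n : ℕ) : MeasurableSpace Ω :=
  ⨆ k ∈ tree n, MeasurableSpace.comap (X k) inferInstance

/-- The regression vector `𝕏_n = (X_n, X_{⌊n/2⌋}, ..., X_{⌊n/2^(p-1)⌋})`. -/
def regVec (X : ℕ → Ω → ℝ) (p n : ℕ) (ω : Ω) : Fin p → ℝ :=
  fun i => X (n / 2 ^ (i : ℕ)) ω

/-- `Y_n = (1, 𝕏_nᵗ)ᵗ ∈ ℝ^(p+1)`. -/
def Yvec (X : ℕ → Ω → ℝ) (p n : ℕ) (ω : Ω) : Fin (p + 1) → ℝ :=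
  Fin.cons 1 (regVec X p n ω)

/-- The design matrix `S_n = Σ_{k ∈ T_{n,p-1}} Y_k Y_kᵗ`. -/
def Smat (X : ℕ → Ω → ℝ) (p n : ℕ) (ω : Ω) : Matrix (Fin (p + 1)) (Fin (p + 1)) ℝ :=
  ∑ k ∈ treeFrom n (p - 1), vecMulVec (Yvec X p k ω) (Yvec X p k ω)

/-- The martingale `M_n = Σ_{k ∈ T_{n-1,p-1}} (ε_{2k} Y_kᵗ, ε_{2k+1} Y_kᵗ)ᵗ ∈ ℝ^(2(p+1))`. -/
def Mvec (X ε : ℕ → Ω → ℝ) (p n : ℕ) (ω : Ω) : Fin 2 × Fin (p + 1) → ℝ :=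
  ∑ k ∈ treeFrom (n - 1) (p - 1), fun ij => ε (2 * k + (ij.1 : ℕ)) ω * Yvec X p k ω ij.2

/-- `Σ_n = I_2 ⊗ S_n`. -/
def Sigmat (X : ℕ → Ω → ℝ) (p n : ℕ) (ω : Ω) :
    Matrix (Fin 2 × Fin (p + 1)) (Fin 2 × Fin (p + 1)) ℝ :=
  (1 : Matrix (Fin 2) (Fin 2) ℝ) ⊗ₖ Smat X p n ω

/-- The normalized martingale quadratic form `M_nᵗ Σ_{n-1}⁻¹ M_n`. -/
def quadM (X ε : ℕ → Ω → ℝ) (p n : ℕ) (ω : Ω) : ℝ :=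
  Mvec X ε p n ω ⬝ᵥ ((Sigmat X p (n - 1) ω)⁻¹).mulVec (Mvec X ε p n ω)

/-- The parameter `θ = (a_0, ..., a_p, b_0, ..., b_p)`. -/
def thetaVec (p : ℕ) (a b : ℕ → ℝ) : Fin 2 × Fin (p + 1) → ℝ :=
  fun ij => if ij.1 = 0 then a (ij.2 : ℕ) else b (ij.2 : ℕ)

/-- The least squares estimator
`θ̂_n = (I_2 ⊗ S_{n-1}⁻¹) Σ_{k ∈ T_{n-1,p-1}} (X_{2k} Y_kᵗ, X_{2k+1} Y_kᵗ)ᵗ`. -/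
def thetaHat (X : ℕ → Ω → ℝ) (p n : ℕ) (ω : Ω) : Fin 2 × Fin (p + 1) → ℝ :=
  ((1 : Matrix (Fin 2) (Fin 2) ℝ) ⊗ₖ (Smat X p (n - 1) ω)⁻¹).mulVec
    (∑ k ∈ treeFrom (n - 1) (p - 1), fun ij => X (2 * k + (ij.1 : ℕ)) ω * Yvec X p k ω ij.2)

/-- The residuals `ε̂_{2k+e}` (for `e = 0, 1`), computed with the estimator `θ̂_m`
where `m = r_k` is the generation of `k`. -/
def epsHat (X : ℕ → Ω → ℝ) (p : ℕ) (e : Fin 2) (k : ℕ) (ω : Ω) : ℝ :=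
  X (2 * k + (e : ℕ)) ω - ∑ j, thetaHat X p (Nat.log 2 k) ω (e, j) * Yvec X p k ω j

/-- The variance estimator `σ̂²_n`. -/
def sigHat (X : ℕ → Ω → ℝ) (p n : ℕ) (ω : Ω) : ℝ :=
  (2 * ((tree (n - 1)).card : ℝ))⁻¹ *
    ∑ k ∈ treeFrom (n - 1) (p - 1), (epsHat X p 0 k ω ^ 2 + epsHat X p 1 k ω ^ 2)

/-- `σ²_n`, the analogue of `σ̂²_n` built from the true noise. -/
def sigBar (ε : ℕ → Ω → ℝ) (p n : ℕ) (ω : Ω) : ℝ :=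
  (2 * ((tree (n - 1)).card : ℝ))⁻¹ *
    ∑ k ∈ treeFrom (n - 1) p, (ε (2 * k) ω ^ 2 + ε (2 * k + 1) ω ^ 2)

/-- The covariance estimator `ρ̂_n`. -/
def rhoHat (X : ℕ → Ω → ℝ) (p n : ℕ) (ω : Ω) : ℝ :=
  ((tree (n - 1)).card : ℝ)⁻¹ *
    ∑ k ∈ treeFrom (n - 1) (p - 1), epsHat X p 0 k ω * epsHat X p 1 k ω

/-- `ρ_n`, the analogue of `ρ̂_n` built from the true noise. -/
def rhoBar (ε : ℕ → Ω → ℝ) (p n : ℕ) (ω : Ω) : ℝ :=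
  ((tree (n - 1)).card : ℝ)⁻¹ * ∑ k ∈ treeFrom (n - 1) p, ε (2 * k) ω * ε (2 * k + 1) ω

/-- `e_1 = (1, 0, ..., 0)ᵗ ∈ ℝ^p`. -/
def e1 (p : ℕ) : Fin p → ℝ := fun i => if (i : ℕ) = 0 then 1 else 0

/-- `λ = ā (I_p − Ā)⁻¹ e_1` with `ā = (a_0 + b_0)/2` and `Ā = (A + B)/2`. -/
def lamVec (p : ℕ) (a b : ℕ → ℝ) : Fin p → ℝ :=
  ((a 0 + b 0) / 2) •
    ((1 - (1 / 2 : ℝ) • (companion p a + companion p b))⁻¹).mulVec (e1 p)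

/-- The matrix `T = (σ² + a̅²) e_1 e_1ᵗ + ½(a_0(Aλe_1ᵗ + e_1λᵗAᵗ) + b_0(Bλe_1ᵗ + e_1λᵗBᵗ))`. -/
def Tmat (p : ℕ) (a b : ℕ → ℝ) (σ2 : ℝ) : Matrix (Fin p) (Fin p) ℝ :=
  (σ2 + (a 0 ^ 2 + b 0 ^ 2) / 2) • vecMulVec (e1 p) (e1 p) +
    (1 / 2 : ℝ) •
      (a 0 • (vecMulVec ((companion p a).mulVec (lamVec p a b)) (e1 p) +
          vecMulVec (e1 p) ((companion p a).mulVec (lamVec p a b))) +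
        b 0 • (vecMulVec ((companion p b).mulVec (lamVec p a b)) (e1 p) +
          vecMulVec (e1 p) ((companion p b).mulVec (lamVec p a b))))

/-- `l` solves the fixed point equation `ℓ = T + ½(A ℓ Aᵗ + B ℓ Bᵗ)`. -/
def IsEll (p : ℕ) (a b : ℕ → ℝ) (σ2 : ℝ) (l : Matrix (Fin p) (Fin p) ℝ) : Prop :=
  l = Tmat p a b σ2 + (1 / 2 : ℝ) •
      (companion p a * l * (companion p a)ᵀ + companion p b * l * (companion p b)ᵀ)

/-- The block matrix `L = [[1, λᵗ], [λ, ℓ]]`. -/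
def Lmat (p : ℕ) (a b : ℕ → ℝ) (l : Matrix (Fin p) (Fin p) ℝ) :
    Matrix (Fin (p + 1)) (Fin (p + 1)) ℝ :=
  Matrix.of (Fin.cons (Fin.cons 1 (lamVec p a b)) fun i => Fin.cons (lamVec p a b i) (l i))

/-- The covariance matrix `Γ = [[σ², ρ], [ρ, σ²]]`. -/
def gammaMat (σ2 ρ : ℝ) : Matrix (Fin 2) (Fin 2) ℝ := !![σ2, ρ; ρ, σ2]

/-- The BAR(`p`) model: dynamics, measurability, moments of the initial states and
the contraction assumption `max(‖A‖, ‖B‖) < 1` (operator norms). -/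
def BARmodel [MeasurableSpace Ω] (μ : Measure Ω) (X ε : ℕ → Ω → ℝ) (p : ℕ)
    (a b : ℕ → ℝ) : Prop :=
  1 ≤ p ∧ (∀ k, Measurable (X k)) ∧ (∀ k, Measurable (ε k)) ∧
    (∀ n, 2 ^ (p - 1) ≤ n → ∀ ω,
      X (2 * n) ω =
          a 0 + (∑ k ∈ Finset.Icc 1 p, a k * X (n / 2 ^ (k - 1)) ω) + ε (2 * n) ω ∧
        X (2 * n + 1) ω =
          b 0 + (∑ k ∈ Finset.Icc 1 p, b k * X (n / 2 ^ (k - 1)) ω) + ε (2 * n + 1) ω) ∧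
    (∀ k, 1 ≤ k → k ≤ 2 ^ (p - 1) - 1 → MemLp (X k) 8 μ) ∧
    ‖toEuclideanCLM (𝕜 := ℝ) (companion p a)‖ < 1 ∧
    ‖toEuclideanCLM (𝕜 := ℝ) (companion p b)‖ < 1

/-- Hypothesis (H.1). -/
def H1 [MeasurableSpace Ω] (μ : Measure Ω) (X ε : ℕ → Ω → ℝ) (p : ℕ) (σ2 : ℝ) : Prop :=
  0 < σ2 ∧ ∀ n, p - 1 ≤ n → ∀ k ∈ gen (n + 1),
    MemLp (ε k) 2 μ ∧ μ[ε k|sigTree X n] =ᵐ[μ] 0 ∧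
      μ[fun ω => ε k ω ^ 2|sigTree X n] =ᵐ[μ] fun _ => σ2

/-- Hypothesis (H.2). -/
def H2 [m0 : MeasurableSpace Ω] [StandardBorelSpace Ω] (μ : Measure Ω) [IsFiniteMeasure μ]
    (X ε : ℕ → Ω → ℝ) (p : ℕ) (σ2 ρ : ℝ) (hsig : ∀ n, sigTree X n ≤ m0) : Prop :=
  |ρ| < σ2 ∧ ∀ n, p - 1 ≤ n → ∀ k ∈ gen (n + 1), ∀ l ∈ gen (n + 1), k ≠ l →
    (k / 2 = l / 2 → μ[fun ω => ε k ω * ε l ω|sigTree X n] =ᵐ[μ] fun _ => ρ) ∧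
      (k / 2 ≠ l / 2 → CondIndepFun (sigTree X n) (hsig n) (ε k) (ε l) μ)

/-- Hypothesis (H.3). -/
def H3 [MeasurableSpace Ω] (μ : Measure Ω) (X ε : ℕ → Ω → ℝ) (p : ℕ) : Prop :=
  (∀ n, p - 1 ≤ n → ∀ k ∈ gen (n + 1), MemLp (ε k) 4 μ) ∧
    ∀ᵐ ω ∂μ, BddAbove {x : ℝ | ∃ n, p - 1 ≤ n ∧ ∃ k ∈ gen (n + 1),
      x = (μ[fun ω' => ε k ω' ^ 4|sigTree X n]) ω}

/-- Hypothesis (H.4). -/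
def H4 [MeasurableSpace Ω] (μ : Measure Ω) (X ε : ℕ → Ω → ℝ) (p : ℕ) (τ4 ν2 : ℝ) : Prop :=
  0 < τ4 ∧ ν2 < τ4 ∧
    (∀ n, p - 1 ≤ n → ∀ k ∈ gen (n + 1),
      μ[fun ω => ε k ω ^ 4|sigTree X n] =ᵐ[μ] fun _ => τ4) ∧
    ∀ n, p - 1 ≤ n → ∀ k ∈ gen n,
      μ[fun ω => ε (2 * k) ω ^ 2 * ε (2 * k + 1) ω ^ 2|sigTree X n] =ᵐ[μ] fun _ => ν2

/-- Hypothesis (H.5). -/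
def H5 [MeasurableSpace Ω] (μ : Measure Ω) (X ε : ℕ → Ω → ℝ) (p : ℕ) : Prop :=
  (∀ n, p - 1 ≤ n → ∀ k ∈ gen (n + 1), MemLp (ε k) 8 μ) ∧
    ∀ᵐ ω ∂μ, BddAbove {x : ℝ | ∃ n, p - 1 ≤ n ∧ ∃ k ∈ gen (n + 1),
      x = (μ[fun ω' => ε k ω' ^ 8|sigTree X n]) ω}

/-- `S_n` is invertible for all `n ≥ p - 1`. -/
def SInvertible (X : ℕ → Ω → ℝ) (p : ℕ) : Prop :=
  ∀ n, p - 1 ≤ n → ∀ ω, IsUnit (Smat X p n ω).det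

end BARpaper

/-!
The noise has the covariance structure of a martingale difference array along the generations:
`E[ε_k ε_l]` is `σ²` for `k = l`, `ρ` for siblings (and `|ρ| < σ²`), and `0` otherwise. Across
generations this is because the older noise is `F_n`-measurable for the generation `n` at which
the younger one is conditionally centred; within a generation it is conditional independence.
Since at most two `l` share the parent of `k`, `E[(Σ_{k ∈ T_{n,p}} ε_k)²] ≤ 2σ²|T_n|`, so the
averages have second moments at most `2σ² / |T_n| ≤ 2σ² 2⁻ⁿ`. These are summable, hence the sum
of the squared averages is integrable, so a.s. finite, and the averages tend to `0` a.s.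
-/

namespace MeasureTheory

variable {Ω : Type*} {m' mΩ : MeasurableSpace Ω} {μ : Measure Ω}

lemma integral_eq_of_condExp_ae_eq_const [IsProbabilityMeasure μ] (hm' : m' ≤ mΩ)
    {f : Ω → ℝ} {c : ℝ} (h : μ[f|m'] =ᵐ[μ] fun _ => c) : ∫ ω, f ω ∂μ = c := by
  rw [← integral_condExp hm', integral_congr_ae h, integral_const, probReal_univ, one_smul]

lemma integral_sq_finsetSum_le {ι : Type*} (s : Finset ι) {f : ι → Ω → ℝ}
    (hf : ∀ i ∈ s, MemLp (f i) 2 μ) {c : ι → ι → ℝ}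
    (hc : ∀ i ∈ s, ∀ j ∈ s, ∫ ω, f i ω * f j ω ∂μ ≤ c i j) :
    ∫ ω, (∑ i ∈ s, f i ω) ^ 2 ∂μ ≤ ∑ i ∈ s, ∑ j ∈ s, c i j := by
  have hint : ∀ i ∈ s, ∀ j ∈ s, Integrable (fun ω => f i ω * f j ω) μ :=
    fun i hi j hj => (hf i hi).integrable_mul (hf j hj)
  simp_rw [sq, Finset.sum_mul_sum]
  rw [integral_finsetSum _ fun i hi => integrable_finsetSum _ (hint i hi)]
  refine Finset.sum_le_sum fun i hi => ?_
  rw [integral_finsetSum _ (hint i hi)]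
  exact Finset.sum_le_sum (hc i hi)

lemma ae_tendsto_zero_of_summable_integral_sq {F : ℕ → Ω → ℝ} (hF : ∀ n, AEMeasurable (F n) μ)
    (hint : ∀ n, Integrable (fun ω => F n ω ^ 2) μ)
    (hsum : Summable fun n => ∫ ω, F n ω ^ 2 ∂μ) :
    ∀ᵐ ω ∂μ, Tendsto (fun n => F n ω) atTop (𝓝 0) := by
  have hlint : ∫⁻ ω, ∑' n, ENNReal.ofReal (F n ω ^ 2) ∂μ ≠ ⊤ := by
    rw [lintegral_tsum fun n => ((hF n).pow_const 2).ennreal_ofReal]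
    simp_rw [← ofReal_integral_eq_lintegral_ofReal (hint _) (ae_of_all _ fun _ => sq_nonneg _)]
    rw [← ENNReal.ofReal_tsum_of_nonneg (fun n => integral_nonneg fun _ => sq_nonneg _) hsum]
    exact ENNReal.ofReal_ne_top
  filter_upwards [ae_lt_top' (AEMeasurable.tsum fun n =>
    ((hF n).pow_const 2).ennreal_ofReal) hlint] with ω hω
  have hsq : Tendsto (fun n => F n ω ^ 2) atTop (𝓝 0) := by
    refine ((ENNReal.summable_toReal hω.ne).congr fun n => ?_).tendsto_atTop_zero
    exact ENNReal.toReal_ofReal (sq_nonneg _)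
  exact (tendsto_zero_iff_abs_tendsto_zero _).2
    (by simpa [Function.comp_def, Real.sqrt_sq_eq_abs] using hsq.sqrt)

end MeasureTheory

namespace ProbabilityTheory

variable {Ω : Type*} {m' mΩ : MeasurableSpace Ω} [StandardBorelSpace Ω] {μ : Measure Ω}
  [IsFiniteMeasure μ] {hm' : m' ≤ mΩ} {f g : Ω → ℝ}

lemma CondIndepFun.ae_indepFun_condExpKernel (h : CondIndepFun m' hm' f g μ)
    (hf : Measurable f) (hg : Measurable g) :
    ∀ᵐ ω ∂μ, IndepFun f g (condExpKernel μ m' ω) := by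
  filter_upwards [ae_of_ae_trim hm' ((condIndepFun_iff_map_prod_eq_prod_map_map hf hg).1 h)]
    with ω hω
  rw [indepFun_iff_map_prod_eq_prod_map_map hf.aemeasurable hg.aemeasurable]
  simpa [Kernel.map_apply _ hf, Kernel.map_apply _ hg, Kernel.map_apply _ (hf.prodMk hg),
    Kernel.prod_apply] using hω

lemma CondIndepFun.condExp_mul_ae_eq (h : CondIndepFun m' hm' f g μ)
    (hf : Measurable f) (hg : Measurable g) (hfi : Integrable f μ) (hgi : Integrable g μ)
    (hfgi : Integrable (f * g) μ) :
    μ[f * g|m'] =ᵐ[μ] μ[f|m'] * μ[g|m'] := by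
  filter_upwards [condExp_ae_eq_integral_condExpKernel hm' hfgi,
    condExp_ae_eq_integral_condExpKernel hm' hfi, condExp_ae_eq_integral_condExpKernel hm' hgi,
    h.ae_indepFun_condExpKernel hf hg, hfi.condExpKernel_ae (m := m'),
    hgi.condExpKernel_ae (m := m')] with ω hfg hf' hg' hind hfk hgk
  rw [hfg, Pi.mul_apply, hf', hg']
  exact hind.integral_mul_eq_mul_integral hfk.aestronglyMeasurable hgk.aestronglyMeasurable

end ProbabilityTheory

namespace BARpaper

lemma card_tree (n : ℕ) : (tree n).card = 2 ^ (n + 1) - 1 := by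
  simp [tree]

lemma two_pow_le_card_tree (n : ℕ) : 2 ^ n ≤ (tree n).card := by
  rw [card_tree, pow_succ]
  have := Nat.one_le_two_pow (n := n)
  omega

lemma tree_mono {n m : ℕ} (h : n ≤ m) : tree n ⊆ tree m :=
  Finset.Icc_subset_Icc_right (Nat.sub_le_sub_right (Nat.pow_le_pow_right two_pos (by omega)) 1)

lemma mem_tree_log {i k : ℕ} (hi : 1 ≤ i) (hik : i ≤ k) : i ∈ tree (Nat.log 2 k) := by
  have := Nat.lt_pow_succ_log_self one_lt_two k
  simp only [tree, Finset.mem_Icc]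
  omega

lemma two_pow_le_of_mem_treeFrom {n q k : ℕ} (hk : k ∈ treeFrom n q) : 2 ^ q ≤ k :=
  (Finset.mem_filter.1 hk).2

lemma mem_gen_log {k : ℕ} (hk : k ≠ 0) : k ∈ gen (Nat.log 2 k) :=
  Finset.mem_Ico.2 ⟨Nat.pow_log_le_self 2 hk, Nat.lt_pow_succ_log_self one_lt_two k⟩

lemma sub_one_le_log_sub_one {p k : ℕ} (hk : 2 ^ p ≤ k) : p - 1 ≤ Nat.log 2 k - 1 :=
  Nat.sub_le_sub_right (Nat.le_log_of_pow_le one_lt_two hk) 1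

lemma mem_gen_log_sub_one_add_one {p k : ℕ} (hp : 1 ≤ p) (hk : 2 ^ p ≤ k) :
    k ∈ gen (Nat.log 2 k - 1 + 1) := by
  rw [Nat.sub_add_cancel (hp.trans (Nat.le_log_of_pow_le one_lt_two hk))]
  exact mem_gen_log (Nat.one_le_iff_ne_zero.1 (Nat.one_le_two_pow.trans hk))

lemma log_eq_of_div_two_eq {k l : ℕ} (hk : 2 ≤ k) (h : k / 2 = l / 2) :
    Nat.log 2 k = Nat.log 2 l := by
  have hl : 2 ≤ l := by omega
  have hk' := Nat.log_div_base 2 k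
  have hl' := Nat.log_div_base 2 l
  have := Nat.le_log_of_pow_le one_lt_two (x := 1) (by simpa using hk)
  have := Nat.le_log_of_pow_le one_lt_two (x := 1) (by simpa using hl)
  rw [h] at hk'
  omega

lemma card_filter_eq_div_two_le (s : Finset ℕ) (m : ℕ) :
    (s.filter fun l => m = l / 2).card ≤ 2 :=
  (Finset.card_le_card (t := {2 * m, 2 * m + 1}) fun l hl => by
    simp only [Finset.mem_filter, Finset.mem_insert, Finset.mem_singleton] at hl ⊢
    omega).trans Finset.card_le_two

lemma sum_sum_ite_div_two_eq_le (s : Finset ℕ) {c : ℝ} (hc : 0 ≤ c) :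
    ∑ k ∈ s, ∑ l ∈ s, (if k / 2 = l / 2 then c else 0) ≤ 2 * c * s.card := by
  calc ∑ k ∈ s, ∑ l ∈ s, (if k / 2 = l / 2 then c else 0)
      = ∑ k ∈ s, ((s.filter fun l => k / 2 = l / 2).card : ℝ) * c := by
        refine Finset.sum_congr rfl fun k _ => ?_
        rw [← Finset.sum_filter, Finset.sum_const, nsmul_eq_mul]
    _ ≤ ∑ _k ∈ s, 2 * c := by
        gcongr with k
        exact_mod_cast card_filter_eq_div_two_le s (k / 2)
    _ = 2 * c * s.card := by
        rw [Finset.sum_const, nsmul_eq_mul, mul_comm]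

variable {Ω : Type*} [mΩ : MeasurableSpace Ω] {μ : Measure Ω} {X ε : ℕ → Ω → ℝ} {p : ℕ}

lemma sigTree_mono (X : ℕ → Ω → ℝ) {n m : ℕ} (h : n ≤ m) : sigTree X n ≤ sigTree X m :=
  biSup_mono fun _ hk => tree_mono h hk

lemma measurable_sigTree {n i : ℕ} (hi : i ∈ tree n) : Measurable[sigTree X n] (X i) :=
  Measurable.of_comap_le (le_biSup (f := fun k => MeasurableSpace.comap (X k) inferInstance) hi)

lemma BARmodel.measurable_noise {a b : ℕ → ℝ} (hmodel : BARmodel μ X ε p a b) {k : ℕ}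
    (hk : 2 ^ p ≤ k) : Measurable[sigTree X (Nat.log 2 k)] (ε k) := by
  obtain ⟨hp, -, -, hdyn, -⟩ := hmodel
  have hpow : 2 ^ p = 2 * 2 ^ (p - 1) := by rw [← pow_succ', Nat.sub_add_cancel hp]
  obtain ⟨u, hku⟩ := Nat.even_or_odd' k
  have hu : 2 ^ (p - 1) ≤ u := by omega
  have hnoise : ∀ c : ℕ → ℝ, (∀ ω, X k ω =
      c 0 + (∑ j ∈ Finset.Icc 1 p, c j * X (u / 2 ^ (j - 1)) ω) + ε k ω) →
      Measurable[sigTree X (Nat.log 2 k)] (ε k) := by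
    intro c hc
    have hε : ε k = fun ω =>
        X k ω - (c 0 + ∑ j ∈ Finset.Icc 1 p, c j * X (u / 2 ^ (j - 1)) ω) := by
      funext ω
      linarith [hc ω]
    have hanc : ∀ j ∈ Finset.Icc 1 p, u / 2 ^ (j - 1) ∈ tree (Nat.log 2 k) := by
      intro j hj
      have hj' : 2 ^ (j - 1) ≤ 2 ^ (p - 1) :=
        Nat.pow_le_pow_right two_pos (Nat.sub_le_sub_right (Finset.mem_Icc.1 hj).2 1)
      refine mem_tree_log ((Nat.one_le_div_iff (by positivity)).2 (hj'.trans hu)) ?_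
      exact (Nat.div_le_self _ _).trans (by omega)
    rw [hε]
    exact (measurable_sigTree (mem_tree_log (Nat.one_le_two_pow.trans hk) le_rfl)).sub
      (measurable_const.add
        (Finset.measurable_sum _ fun j hj => (measurable_sigTree (hanc j hj)).const_mul (c j)))
  rcases hku with rfl | rfl
  · exact hnoise a fun ω => (hdyn u hu ω).1
  · exact hnoise b fun ω => (hdyn u hu ω).2

variable {σ2 : ℝ}

lemma H1.spec (h1 : H1 μ X ε p σ2) (hp : 1 ≤ p) {k : ℕ} (hk : 2 ^ p ≤ k) :
    MemLp (ε k) 2 μ ∧ μ[ε k|sigTree X (Nat.log 2 k - 1)] =ᵐ[μ] 0 ∧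
      μ[fun ω => ε k ω ^ 2|sigTree X (Nat.log 2 k - 1)] =ᵐ[μ] fun _ => σ2 :=
  h1.2 _ (sub_one_le_log_sub_one hk) k (mem_gen_log_sub_one_add_one hp hk)

lemma integral_noise_mul_self [IsProbabilityMeasure μ] (hsig : ∀ n, sigTree X n ≤ mΩ)
    (h1 : H1 μ X ε p σ2) (hp : 1 ≤ p) {k : ℕ} (hk : 2 ^ p ≤ k) :
    ∫ ω, ε k ω * ε k ω ∂μ = σ2 := by
  simp_rw [← sq]
  exact integral_eq_of_condExp_ae_eq_const (hsig _) (h1.spec hp hk).2.2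

lemma integral_noise_mul_of_log_lt [IsProbabilityMeasure μ] {a b : ℕ → ℝ}
    (hsig : ∀ n, sigTree X n ≤ mΩ) (hmodel : BARmodel μ X ε p a b) (h1 : H1 μ X ε p σ2)
    {k l : ℕ} (hk : 2 ^ p ≤ k) (hl : 2 ^ p ≤ l) (hlt : Nat.log 2 k < Nat.log 2 l) :
    ∫ ω, ε k ω * ε l ω ∂μ = 0 := by
  obtain ⟨hkL2, -, -⟩ := h1.spec hmodel.1 hk
  obtain ⟨hlL2, hl0, -⟩ := h1.spec hmodel.1 hl
  have hkm : StronglyMeasurable[sigTree X (Nat.log 2 l - 1)] (ε k) :=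
    ((hmodel.measurable_noise hk).mono (sigTree_mono X (by omega)) le_rfl).stronglyMeasurable
  refine integral_eq_of_condExp_ae_eq_const (hsig (Nat.log 2 l - 1)) ?_
  filter_upwards [condExp_mul_of_stronglyMeasurable_left hkm (hkL2.integrable_mul hlL2)
    (hlL2.integrable one_le_two), hl0] with ω hω hω0
  rw [← Pi.mul_def, hω, Pi.mul_apply, hω0, Pi.zero_apply, mul_zero]

variable [StandardBorelSpace Ω] {ρ : ℝ}

lemma H2.spec [IsFiniteMeasure μ] {hsig : ∀ n, sigTree X n ≤ mΩ} (h2 : H2 μ X ε p σ2 ρ hsig)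
    (hp : 1 ≤ p) {k l : ℕ} (hk : 2 ^ p ≤ k) (hl : 2 ^ p ≤ l) (hlog : Nat.log 2 k = Nat.log 2 l)
    (hne : k ≠ l) :
    (k / 2 = l / 2 → μ[fun ω => ε k ω * ε l ω|sigTree X (Nat.log 2 k - 1)] =ᵐ[μ] fun _ => ρ) ∧
      (k / 2 ≠ l / 2 → CondIndepFun (sigTree X (Nat.log 2 k - 1)) (hsig _) (ε k) (ε l) μ) :=
  h2.2 _ (sub_one_le_log_sub_one hk) k (mem_gen_log_sub_one_add_one hp hk) l
    (hlog ▸ mem_gen_log_sub_one_add_one hp hl) hne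

lemma integral_noise_mul_of_div_two_eq [IsProbabilityMeasure μ] {hsig : ∀ n, sigTree X n ≤ mΩ}
    (h2 : H2 μ X ε p σ2 ρ hsig) (hp : 1 ≤ p) {k l : ℕ} (hk : 2 ^ p ≤ k) (hl : 2 ^ p ≤ l)
    (hne : k ≠ l) (hkl : k / 2 = l / 2) :
    ∫ ω, ε k ω * ε l ω ∂μ = ρ := by
  have h2p : 2 ≤ 2 ^ p := Nat.le_self_pow (by omega) 2
  exact integral_eq_of_condExp_ae_eq_const (hsig _)
    ((h2.spec hp hk hl (log_eq_of_div_two_eq (h2p.trans hk) hkl) hne).1 hkl)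

lemma integral_noise_mul_of_div_two_ne [IsProbabilityMeasure μ] {a b : ℕ → ℝ}
    {hsig : ∀ n, sigTree X n ≤ mΩ} (hmodel : BARmodel μ X ε p a b) (h1 : H1 μ X ε p σ2)
    (h2 : H2 μ X ε p σ2 ρ hsig) {k l : ℕ} (hk : 2 ^ p ≤ k) (hl : 2 ^ p ≤ l)
    (hlog : Nat.log 2 k = Nat.log 2 l) (hkl : k / 2 ≠ l / 2) :
    ∫ ω, ε k ω * ε l ω ∂μ = 0 := by
  obtain ⟨hkL2, hk0, -⟩ := h1.spec hmodel.1 hk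
  obtain ⟨hlL2, -, -⟩ := h1.spec hmodel.1 hl
  have hind := (h2.spec hmodel.1 hk hl hlog (by rintro rfl; exact hkl rfl)).2 hkl
  refine integral_eq_of_condExp_ae_eq_const (hsig (Nat.log 2 k - 1)) ?_
  filter_upwards [hind.condExp_mul_ae_eq (hmodel.2.2.1 k) (hmodel.2.2.1 l)
    (hkL2.integrable one_le_two) (hlL2.integrable one_le_two) (hkL2.integrable_mul hlL2), hk0]
    with ω hω hω0
  rw [← Pi.mul_def, hω, Pi.mul_apply, hω0, Pi.zero_apply, zero_mul]

lemma integral_noise_mul_le [IsProbabilityMeasure μ] {a b : ℕ → ℝ}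
    {hsig : ∀ n, sigTree X n ≤ mΩ} (hmodel : BARmodel μ X ε p a b) (h1 : H1 μ X ε p σ2)
    (h2 : H2 μ X ε p σ2 ρ hsig) {k l : ℕ} (hk : 2 ^ p ≤ k) (hl : 2 ^ p ≤ l) :
    ∫ ω, ε k ω * ε l ω ∂μ ≤ if k / 2 = l / 2 then σ2 else 0 := by
  split_ifs with hkl
  · obtain rfl | hne := eq_or_ne k l
    · exact (integral_noise_mul_self hsig h1 hmodel.1 hk).le
    · rw [integral_noise_mul_of_div_two_eq h2 hmodel.1 hk hl hne hkl]
      exact (le_abs_self ρ).trans h2.1.le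
  · rcases lt_trichotomy (Nat.log 2 k) (Nat.log 2 l) with hlt | hlog | hgt
    · exact (integral_noise_mul_of_log_lt hsig hmodel h1 hk hl hlt).le
    · exact (integral_noise_mul_of_div_two_ne hmodel h1 h2 hk hl hlog hkl).le
    · simp_rw [mul_comm (ε k _)]
      exact (integral_noise_mul_of_log_lt hsig hmodel h1 hl hk hgt).le

lemma integral_sq_sum_noise_le [IsProbabilityMeasure μ] {a b : ℕ → ℝ}
    {hsig : ∀ n, sigTree X n ≤ mΩ} (hmodel : BARmodel μ X ε p a b) (h1 : H1 μ X ε p σ2)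
    (h2 : H2 μ X ε p σ2 ρ hsig) (n : ℕ) :
    ∫ ω, (∑ k ∈ treeFrom n p, ε k ω) ^ 2 ∂μ ≤ 2 * σ2 * (tree n).card := by
  calc ∫ ω, (∑ k ∈ treeFrom n p, ε k ω) ^ 2 ∂μ
      ≤ ∑ k ∈ treeFrom n p, ∑ l ∈ treeFrom n p, if k / 2 = l / 2 then σ2 else 0 :=
        integral_sq_finsetSum_le _
          (fun k hk => (h1.spec hmodel.1 (two_pow_le_of_mem_treeFrom hk)).1)
          fun k hk l hl => integral_noise_mul_le hmodel h1 h2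
            (two_pow_le_of_mem_treeFrom hk) (two_pow_le_of_mem_treeFrom hl)
    _ ≤ 2 * σ2 * (treeFrom n p).card := sum_sum_ite_div_two_eq_le _ h1.1.le
    _ ≤ 2 * σ2 * (tree n).card := by
        have := h1.1
        gcongr
        exact Finset.filter_subset _ _

lemma integral_sq_noise_average_le [IsProbabilityMeasure μ] {a b : ℕ → ℝ}
    {hsig : ∀ n, sigTree X n ≤ mΩ} (hmodel : BARmodel μ X ε p a b) (h1 : H1 μ X ε p σ2)
    (h2 : H2 μ X ε p σ2 ρ hsig) (n : ℕ) :
    ∫ ω, (((tree n).card : ℝ)⁻¹ * ∑ k ∈ treeFrom n p, ε k ω) ^ 2 ∂μ ≤ 2 * σ2 * (1 / 2) ^ n := by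
  have hcard : (2 : ℝ) ^ n ≤ (tree n).card := by exact_mod_cast two_pow_le_card_tree n
  have hpos : (0 : ℝ) < (tree n).card := (by positivity : (0 : ℝ) < 2 ^ n).trans_le hcard
  simp_rw [mul_pow]
  rw [integral_const_mul]
  calc ((tree n).card : ℝ)⁻¹ ^ 2 * ∫ ω, (∑ k ∈ treeFrom n p, ε k ω) ^ 2 ∂μ
      ≤ ((tree n).card : ℝ)⁻¹ ^ 2 * (2 * σ2 * (tree n).card) := by
        gcongr
        exact integral_sq_sum_noise_le hmodel h1 h2 n
    _ = 2 * σ2 / (tree n).card := by field_simp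
    _ ≤ 2 * σ2 * (1 / 2) ^ n := by
        have := h1.1
        rw [_root_.one_div_pow, ← div_eq_mul_one_div]
        gcongr

theorem noise_average_tendsto_zero {Ω : Type*} [m0 : MeasurableSpace Ω] [StandardBorelSpace Ω]
    (μ : Measure Ω) [IsProbabilityMeasure μ]
    (p : ℕ) (X ε : ℕ → Ω → ℝ) (a b : ℕ → ℝ) (σ2 ρ : ℝ)
    (hsig : ∀ n, sigTree X n ≤ m0)
    (hmodel : BARmodel μ X ε p a b)
    (h1 : H1 μ X ε p σ2)
    (h2 : H2 μ X ε p σ2 ρ hsig) :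
    ∀ᵐ ω ∂μ, Tendsto
      (fun n : ℕ => ((tree n).card : ℝ)⁻¹ * ∑ k ∈ treeFrom n p, ε k ω) atTop (𝓝 0) := by
  have hsumL2 : ∀ n, MemLp (fun ω => ∑ k ∈ treeFrom n p, ε k ω) 2 μ := fun n =>
    memLp_finsetSum _ fun k hk => (h1.spec hmodel.1 (two_pow_le_of_mem_treeFrom hk)).1
  refine ae_tendsto_zero_of_summable_integral_sq
    (fun n => ((hsumL2 n).const_mul _).aestronglyMeasurable.aemeasurable)
    (fun n => ((hsumL2 n).const_mul _).integrable_sq) ?_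
  exact (summable_geometric_two.mul_left (2 * σ2)).of_nonneg_of_le
    (fun n => integral_nonneg fun _ => sq_nonneg _)
    (integral_sq_noise_average_le hmodel h1 h2)

end BARpaper
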